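/- arXiv:1811.06005 — 3 statements merged into one kernel-verified Lean document; each statement's English description precedes it below -/
import Mathlib

section
/- Let H be a complex Hilbert space, T a positive bounded operator on H, K a closed subspace of H, and P_K : H → K the orthogonal projection. Then there exists a unique positive bounded operator M on K such that (i) T − P_K* M P_K ≥ 0, and (ii) whenever M̃ is a positive bounded operator on K with T − P_K* M̃ P_K ≥ 0, one has M̃ ≤ M. -/
set_option maxHeartbeats 1000000
set_option synthInstance.maxHeartbeats 400000

open ContinuousLinearMap RCLike
open scoped InnerProductSpace

noncomputable section

/-- **Existence and uniqueness of the Schur complement.**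
Let `H` be a complex Hilbert space, `T ≥ 0` a bounded operator on `H`, and `K` a closed
subspace of `H` (encoded by `[CompleteSpace K]`), with orthogonal projection
`P_K : H → K` and inclusion `P_K* = K.subtypeL`.  Then there is a unique positive
bounded operator `M` on `K` such that (i) `T - P_K* M P_K ≥ 0`, and (ii) any positive
`M'` on `K` with `T - P_K* M' P_K ≥ 0` satisfies `M' ≤ M`. -/
theorem schur_complement_exists_unique
    {H : Type*} [NormedAddCommGroup H] [InnerProductSpace ℂ H] [CompleteSpace H]
    (T : H →L[ℂ] H) (hT : T.IsPositive)
    (K : Submodule ℂ H) [CompleteSpace K] :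
    ∃! M : K →L[ℂ] K, M.IsPositive ∧
      (T - K.subtypeL ∘L M ∘L (K.orthogonalProjectionOnto : H →L[ℂ] K)).IsPositive ∧
      ∀ M' : K →L[ℂ] K, M'.IsPositive →
        (T - K.subtypeL ∘L M' ∘L (K.orthogonalProjectionOnto : H →L[ℂ] K)).IsPositive →
        (M - M').IsPositive := by
  have hT0 : (0:H→L[ℂ]H) ≤ T := T.nonneg_iff_isPositive.2 hT
  set S : H →L[ℂ] H := CFC.sqrt T with hSdef
  have hS0 : (0:H→L[ℂ]H) ≤ S := CFC.sqrt_nonneg T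
  have hSsa : IsSelfAdjoint S := IsSelfAdjoint.of_nonneg hS0
  have hSS : S ∘L S = T := by rw [← mul_def]; exact CFC.sqrt_mul_sqrt_self T hT0
  set L : Submodule ℂ H := ((Kᗮ).map (S : H →ₗ[ℂ] H)).topologicalClosure with hLdef
  haveI : CompleteSpace L := ((Kᗮ).map (S : H →ₗ[ℂ] H)).isClosed_topologicalClosure.completeSpace_coe
  haveI : CompleteSpace ↥(Lᗮ) := L.isClosed_orthogonal.completeSpace_coe
  set Q : H →L[ℂ] H := Lᗮ.subtypeL ∘L Lᗮ.orthogonalProjectionOnto with hQdef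
  have hQ0 : ∀ y ∈ L, Q y = 0 := by
    intro y hy
    simp only [hQdef, comp_apply]
    rw [Submodule.orthogonalProjectionOnto_apply_of_mem_orthogonal
      (L.le_orthogonal_orthogonal hy)]
    simp
  have hQnorm : ∀ x, ‖Q x‖ ≤ ‖x‖ := by
    intro x
    calc ‖Q x‖ ≤ ‖Q‖ * ‖x‖ := Q.le_opNorm x
    _ ≤ 1 * ‖x‖ := by
        gcongr
        refine le_trans (opNorm_comp_le _ _) ?_
        exact mul_le_one₀ (Submodule.norm_subtypeL_le _) (norm_nonneg _)
          (Submodule.orthogonalProjectionOnto_norm_le _)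
    _ = ‖x‖ := one_mul ‖x‖
  have hQmem : ∀ x : H, x - Q x ∈ L := by
    intro x
    have := Submodule.sub_starProjection_mem_orthogonal (K := Lᗮ) x
    rwa [Submodule.orthogonal_orthogonal] at this
  set A : K →L[ℂ] H := Q ∘L (S ∘L K.subtypeL) with hAdef
  set M : K →L[ℂ] K := adjoint A ∘L A with hMdef
  have hM : M.IsPositive := by
    have := (isPositive_one (E := H)).adjoint_conj A
    simpa [one_def] using this
  have hMf : ∀ z : K, re ⟪M z, z⟫_ℂ = ‖A z‖^2 := by
    intro z
    rw [hMdef, comp_apply, adjoint_inner_left]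
    exact inner_self_eq_norm_sq _
  have hsym := isSelfAdjoint_iff_isSymmetric.mp hSsa
  have hTinner : ∀ h : H, re ⟪T h, h⟫_ℂ = ‖S h‖^2 := by
    intro h
    rw [← hSS, comp_apply]
    rw [show (⟪S (S h), h⟫_ℂ) = ⟪S h, S h⟫_ℂ from hsym (S h) h]
    exact inner_self_eq_norm_sq _
  have hASh : ∀ h : H, A (K.orthogonalProjectionOnto h) = Q (S h) := by
    intro h
    have hg : h - (K.subtypeL (K.orthogonalProjectionOnto h)) ∈ Kᗮ :=
      Submodule.sub_starProjection_mem_orthogonal h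
    have hmem : S h - S (K.subtypeL (K.orthogonalProjectionOnto h)) ∈ L := by
      refine Submodule.le_topologicalClosure _ ?_
      exact ⟨_, hg, by rw [map_sub]; rfl⟩
    have h0 := hQ0 _ hmem
    rw [map_sub, sub_eq_zero] at h0
    simp only [hAdef, comp_apply]
    exact h0.symm
  have hιpos : ∀ (N : K →L[ℂ] K), N.IsPositive →
      (K.subtypeL ∘L N ∘L (K.orthogonalProjectionOnto : H →L[ℂ] K)).IsPositive := by
    intro N hN
    have := hN.conj_adjoint (K.subtypeL)
    rwa [Submodule.adjoint_subtypeL] at this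
  have hinner : ∀ (N : K →L[ℂ] K) (h : H),
      ⟪(K.subtypeL ∘L N ∘L (K.orthogonalProjectionOnto : H →L[ℂ] K)) h, h⟫_ℂ
        = ⟪N (K.orthogonalProjectionOnto h), K.orthogonalProjectionOnto h⟫_ℂ := by
    intro N h
    simp only [comp_apply]
    rw [← Submodule.adjoint_orthogonalProjectionOnto, adjoint_inner_left]
  have hpos1 : (T - K.subtypeL ∘L M ∘L (K.orthogonalProjectionOnto : H →L[ℂ] K)).IsPositive := by
    refine ⟨hT.1.sub (hιpos M hM).1, fun h => ?_⟩
    rw [reApplyInnerSelf_apply, sub_apply, inner_sub_left, map_sub, hinner, hTinner, hMf, hASh,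
      sub_nonneg]
    exact pow_le_pow_left₀ (norm_nonneg _) (hQnorm _) 2
  have hmax : ∀ M' : K →L[ℂ] K, M'.IsPositive →
      (T - K.subtypeL ∘L M' ∘L (K.orthogonalProjectionOnto : H →L[ℂ] K)).IsPositive →
      (M - M').IsPositive := by
    intro M' hM' hD'
    refine ⟨hM.1.sub hM'.1, fun f => ?_⟩
    rw [reApplyInnerSelf_apply, sub_apply, inner_sub_left, map_sub, hMf, sub_nonneg]
    have key : ∀ y ∈ L, re ⟪M' f, f⟫_ℂ ≤ ‖S (K.subtypeL f) - y‖^2 := by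
      intro y hy
      have hclosed : IsClosed {y : H | re ⟪M' f, f⟫_ℂ ≤ ‖S (K.subtypeL f) - y‖^2} := by
        apply isClosed_le continuous_const
        fun_prop
      have hsub : ((Kᗮ).map (S : H →ₗ[ℂ] H) : Set H) ⊆
          {y : H | re ⟪M' f, f⟫_ℂ ≤ ‖S (K.subtypeL f) - y‖^2} := by
        rintro _ ⟨g, hg, rfl⟩
        have hx := hD'.2 (K.subtypeL f - g)
        rw [reApplyInnerSelf_apply, sub_apply, inner_sub_left, map_sub, sub_nonneg, hinner,
          hTinner] at hx
        have hPf : K.orthogonalProjectionOnto (K.subtypeL f - g) = f := by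
          rw [map_sub, Submodule.orthogonalProjectionOnto_apply_of_mem_orthogonal hg]
          simp
        rw [hPf] at hx
        simpa [map_sub] using hx
      have hcl := closure_minimal hsub hclosed
      have : y ∈ closure (((Kᗮ).map (S : H →ₗ[ℂ] H) : Set H)) := by
        rw [← Submodule.topologicalClosure_coe]; exact hy
      exact hcl this
    have hAf : S (K.subtypeL f) - A f ∈ L := by
      have := hQmem (S (K.subtypeL f))
      simpa only [hAdef, comp_apply] using this
    have hfin := key _ hAf
    rwa [sub_sub_cancel] at hfin
  refine ⟨M, ⟨hM, hpos1, hmax⟩, ?_⟩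
  rintro M₂ ⟨hM₂, hpos₂, hmax₂⟩
  have h1 : M ≤ M₂ := (le_def _ _).2 (hmax₂ M hM hpos1)
  have h2 : M₂ ≤ M := (le_def _ _).2 (hmax M₂ hM₂ hpos₂)
  exact le_antisymm h2 h1
end
end

section
/- Let T be a positive bounded operator on a complex Hilbert space H, K a closed subspace, and M the Schur complement of T supported on K. Then for every f ∈ K, ⟨Mf,f⟩ = inf over g ∈ K^⊥ of ⟨T(f+g), f+g⟩. -/
set_option maxHeartbeats 1000000
set_option synthInstance.maxHeartbeats 400000

open ContinuousLinearMap

noncomputable section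

/-- **Variational formula for the Schur complement.**
Let `T ≥ 0` be a bounded operator on a complex Hilbert space `H`, `K` a closed subspace
(encoded by `[CompleteSpace K]`), and `M` the Schur complement of `T` supported on `K`,
i.e. the (unique) positive operator on `K` with `T - P_K* M P_K ≥ 0` which dominates every
positive `M'` on `K` with `T - P_K* M' P_K ≥ 0`.  Then for every `f ∈ K`,
`⟨Mf, f⟩ = inf { ⟨T(f+g), f+g⟩ : g ∈ K^⊥ }`. -/
theorem schur_complement_inf_formula
    {H : Type*} [NormedAddCommGroup H] [InnerProductSpace ℂ H] [CompleteSpace H]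
    (T : H →L[ℂ] H) (hT : T.IsPositive)
    (K : Submodule ℂ H) [CompleteSpace K]
    (M : K →L[ℂ] K) (hMpos : M.IsPositive)
    (hM : (T - K.subtypeL ∘L M ∘L (K.orthogonalProjectionOnto : H →L[ℂ] K)).IsPositive)
    (hMmax : ∀ M' : K →L[ℂ] K, M'.IsPositive →
      (T - K.subtypeL ∘L M' ∘L (K.orthogonalProjectionOnto : H →L[ℂ] K)).IsPositive →
      (M - M').IsPositive) :
    ∀ f : K, (inner ℂ (M f) f : ℂ).re =
      ⨅ g : Kᗮ, (inner ℂ (T ((f : H) + (g : H))) ((f : H) + (g : H)) : ℂ).re := by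
  classical
  set P : H →L[ℂ] K := (K.orthogonalProjectionOnto : H →L[ℂ] K) with hPdef
  set D : H →L[ℂ] H := T - K.subtypeL ∘L M ∘L P with hDdef
  have hDpos : D.IsPositive := hM
  set S : H →L[ℂ] H := CFC.sqrt D with hSdef
  have hSpos : S.IsPositive := (nonneg_iff_isPositive _).mp (CFC.sqrt_nonneg _)
  have hSS : S ∘L S = D := by
    have := CFC.sqrt_mul_sqrt_self D ((nonneg_iff_isPositive D).mpr hDpos)
    exact this
  have hSadj : ContinuousLinearMap.adjoint S = S := isSelfAdjoint_iff'.mp hSpos.isSelfAdjoint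
  -- ⟪D h, h⟫.re = ‖S h‖ ^ 2
  have hDnorm : ∀ h : H, (inner ℂ (D h) h : ℂ).re = ‖S h‖ ^ 2 := by
    intro h
    have h1 : D h = S (S h) := by rw [← hSS]; rfl
    have h2 := ContinuousLinearMap.adjoint_inner_left S h (S h)
    rw [hSadj] at h2
    rw [h1, h2]
    exact inner_self_eq_norm_sq (𝕜 := ℂ) (S h)
  -- P kills Kᗮ and fixes K
  have hPadd : ∀ (f : K) (g : Kᗮ), P ((f : H) + (g : H)) = f := by
    intro f g
    have h1 : P ((f : H)) = f := Submodule.orthogonalProjectionOnto_mem_subspace_eq_self f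
    have h2 : P ((g : H)) = 0 :=
      Submodule.orthogonalProjectionOnto_apply_of_mem_orthogonal g.2
    rw [map_add, h1, h2, add_zero]
  -- inner ℂ of an element of K embedded, against h, splits
  have hinner_embed : ∀ (x : K) (h : H), (inner ℂ ((x : H)) h : ℂ) = inner ℂ x (P h) := by
    intro x h
    have h1 := ContinuousLinearMap.adjoint_inner_right K.subtypeL x h
    rw [Submodule.adjoint_subtypeL] at h1
    exact h1.symm
  -- main expansion
  have expand : ∀ (f : K) (h : H), P h = f →
      (inner ℂ (T h) h : ℂ).re = (inner ℂ (M f) f : ℂ).re + ‖S h‖ ^ 2 := by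
    intro f h hPh
    have hDh : D h = T h - (K.subtypeL ∘L M ∘L P) h := by
      rw [hDdef]; rfl
    have h2 : (inner ℂ ((K.subtypeL ∘L M ∘L P) h) h : ℂ) = inner ℂ (M f) f := by
      have : (K.subtypeL ∘L M ∘L P) h = ((M f : K) : H) := by
        simp [ContinuousLinearMap.comp_apply, hPh]
      rw [this, hinner_embed (M f) h, hPh]
    have h3 : (inner ℂ (D h) h : ℂ) = inner ℂ (T h) h - inner ℂ (M f) f := by
      rw [hDh, inner_sub_left, h2]
    have := hDnorm h
    rw [h3] at this
    have h4 : (inner ℂ (T h) h : ℂ).re - (inner ℂ (M f) f : ℂ).re = ‖S h‖ ^ 2 := by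
      rw [← this]; simp
    linarith
  -- the closed subspace W
  set W : Submodule ℂ H := (Kᗮ.map (S : H →ₗ[ℂ] H)).topologicalClosure with hWdef
  haveI : CompleteSpace W :=
    (Submodule.isClosed_topologicalClosure _).completeSpace_coe
  have hSW : ∀ g : Kᗮ, S (g : H) ∈ W := by
    intro g
    exact Submodule.le_topologicalClosure _ (Submodule.mem_map_of_mem g.2)
  set A : K →L[ℂ] H := (Wᗮ.subtypeL ∘L (Wᗮ.orthogonalProjectionOnto : H →L[ℂ] Wᗮ)) ∘L
      (S ∘L K.subtypeL) with hAdef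
  set N : K →L[ℂ] K := ContinuousLinearMap.adjoint A ∘L A with hNdef
  have hNval : ∀ x : K, (inner ℂ (N x) x : ℂ).re = ‖A x‖ ^ 2 := by
    intro x
    have h1 := ContinuousLinearMap.adjoint_inner_left A x (A x)
    have h2 : (inner ℂ (N x) x : ℂ) = inner ℂ (A x) (A x) := h1
    rw [h2]
    exact inner_self_eq_norm_sq (𝕜 := ℂ) (A x)
  have hNsa : IsSelfAdjoint N := by
    rw [isSelfAdjoint_iff', hNdef, ContinuousLinearMap.adjoint_comp, adjoint_adjoint]
  have hNpos : N.IsPositive := by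
    refine ⟨isSelfAdjoint_iff_isSymmetric.mp hNsa, fun x => ?_⟩
    rw [ContinuousLinearMap.reApplyInnerSelf_apply]
    show 0 ≤ (inner ℂ (N x) x : ℂ).re
    rw [hNval x]
    exact sq_nonneg _
  -- key norm bound : A (P h) = projection of S h onto Wᗮ
  have hAP : ∀ h : H, (A (P h) : H) = ((Wᗮ.orthogonalProjectionOnto (S h) : Wᗮ) : H) := by
    intro h
    have hdec : S h = S ((P h : K) : H) + S (h - ((P h : K) : H)) := by
      rw [← map_add]; congr 1; abel
    have hmem : S (h - ((P h : K) : H)) ∈ W :=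
      hSW ⟨_, Submodule.sub_starProjection_mem_orthogonal h⟩
    have hzero : Wᗮ.orthogonalProjectionOnto (S (h - ((P h : K) : H))) = 0 :=
      Submodule.orthogonalProjectionOnto_apply_of_mem_orthogonal
        (Submodule.le_orthogonal_orthogonal W hmem)
    rw [hAdef]
    simp only [ContinuousLinearMap.comp_apply]
    rw [hdec, map_add, hzero, add_zero]
    rfl
  have hAle : ∀ h : H, ‖A (P h)‖ ≤ ‖S h‖ := by
    intro h
    rw [hAP h]
    calc ‖((Wᗮ.orthogonalProjectionOnto (S h) : Wᗮ) : H)‖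
        = ‖Wᗮ.orthogonalProjectionOnto (S h)‖ := rfl
      _ ≤ ‖(Wᗮ.orthogonalProjectionOnto : H →L[ℂ] Wᗮ)‖ * ‖S h‖ := le_opNorm _ _
      _ ≤ 1 * ‖S h‖ := by
          exact mul_le_mul_of_nonneg_right (Submodule.orthogonalProjectionOnto_norm_le _) (norm_nonneg _)
      _ = ‖S h‖ := one_mul _
  -- admissibility of M + N
  have hrearr : T - K.subtypeL ∘L (M + N) ∘L P = D - K.subtypeL ∘L N ∘L P := by
    rw [hDdef]
    ext h
    simp only [ContinuousLinearMap.sub_apply, ContinuousLinearMap.comp_apply,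
      ContinuousLinearMap.add_apply, map_add, Submodule.coe_add]
    abel
  have hNembed : ∀ h : H, (inner ℂ ((K.subtypeL ∘L N ∘L P) h) h : ℂ) = inner ℂ (N (P h)) (P h) := by
    intro h
    have : (K.subtypeL ∘L N ∘L P) h = ((N (P h) : K) : H) := rfl
    rw [this, hinner_embed (N (P h)) h]
  have hadmiss : (T - K.subtypeL ∘L (M + N) ∘L P).IsPositive := by
    rw [hrearr]
    constructor
    · have hsa2 : IsSelfAdjoint (K.subtypeL ∘L N ∘L P) := by
        rw [isSelfAdjoint_iff']
        rw [ContinuousLinearMap.adjoint_comp, ContinuousLinearMap.adjoint_comp,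
          Submodule.adjoint_subtypeL, Submodule.adjoint_orthogonalProjection,
          isSelfAdjoint_iff'.mp hNsa]
        rw [hPdef]
        ext x
        rfl
      exact isSelfAdjoint_iff_isSymmetric.mp (hDpos.isSelfAdjoint.sub hsa2)
    · intro h
      have e1 : (D - K.subtypeL ∘L N ∘L P).reApplyInnerSelf h
          = (inner ℂ (D h) h : ℂ).re - (inner ℂ (N (P h)) (P h) : ℂ).re := by
        rw [ContinuousLinearMap.reApplyInnerSelf_apply]
        show ((inner ℂ ((D - K.subtypeL ∘L N ∘L P) h) h : ℂ)).re = _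
        rw [ContinuousLinearMap.sub_apply, inner_sub_left, hNembed h]
        simp
      rw [e1, hDnorm h, hNval (P h)]
      have := hAle h
      nlinarith [norm_nonneg (A (P h)), norm_nonneg (S h)]
  -- maximality forces A = 0 on K
  have hMN := hMmax (M + N) (hMpos.add hNpos) hadmiss
  intro f
  have hAf : A f = 0 := by
    have h1 : (0:ℝ) ≤ (inner ℂ ((M - (M + N)) f) f : ℂ).re := hMN.2 f
    have h2 : (M - (M + N)) f = -(N f) := by
      simp [ContinuousLinearMap.sub_apply]
    rw [h2, inner_neg_left] at h1
    have h3 : (inner ℂ (N f) f : ℂ).re ≤ 0 := by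
      rw [Complex.neg_re] at h1
      linarith
    rw [hNval f] at h3
    have : ‖A f‖ = 0 := by nlinarith [norm_nonneg (A f), sq_nonneg ‖A f‖]
    exact norm_eq_zero.mp this
  -- hence S f ∈ W
  have hSfW : S (f : H) ∈ W := by
    have hP : Wᗮ.orthogonalProjectionOnto (S (f : H)) = 0 := by
      have h1 : (A (P (f : H)) : H) = ((Wᗮ.orthogonalProjectionOnto (S (f : H)) : Wᗮ) : H) :=
        hAP (f : H)
      have h2 : P ((f : H)) = f := by
        rw [hPdef]; exact Submodule.orthogonalProjectionOnto_mem_subspace_eq_self f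
      rw [h2, hAf] at h1
      exact Subtype.coe_injective h1.symm
    have := Submodule.orthogonalProjectionOnto_eq_zero_iff.mp hP
    rwa [Submodule.orthogonal_orthogonal] at this
  -- conclude
  set F : Kᗮ → ℝ := fun g => (inner ℂ (T ((f : H) + (g : H))) ((f : H) + (g : H)) : ℂ).re with hFdef
  have hFeq : ∀ g : Kᗮ, F g = (inner ℂ (M f) f : ℂ).re + ‖S ((f : H) + (g : H))‖ ^ 2 := by
    intro g
    exact expand f _ (hPadd f g)
  haveI : Nonempty Kᗮ := ⟨0⟩
  have hbdd : BddBelow (Set.range F) := by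
    refine ⟨(inner ℂ (M f) f : ℂ).re, ?_⟩
    rintro y ⟨g, rfl⟩
    rw [hFeq g]
    exact le_add_of_nonneg_right (sq_nonneg _)
  refine le_antisymm (le_ciInf fun g => ?_) ?_
  · rw [hFeq g]; exact le_add_of_nonneg_right (sq_nonneg _)
  · refine le_of_forall_pos_le_add fun ε hε => ?_
    have hmem : S (f : H) ∈ closure ((Kᗮ.map (S : H →ₗ[ℂ] H)) : Set H) := by
      rw [← Submodule.topologicalClosure_coe]
      exact hSfW
    obtain ⟨b, hbmem, hbdist⟩ := Metric.mem_closure_iff.mp hmem (Real.sqrt ε)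
      (Real.sqrt_pos.mpr hε)
    obtain ⟨g, hg, rfl⟩ := hbmem
    set g' : Kᗮ := ⟨-g, neg_mem hg⟩ with hg'def
    have hnorm : ‖S ((f : H) + (g' : H))‖ < Real.sqrt ε := by
      have : S ((f : H) + (g' : H)) = S (f : H) - S g := by
        rw [map_add]
        have : S ((g' : Kᗮ) : H) = -(S g) := by
          rw [hg'def]; simp
        rw [this]; abel
      rw [this, ← dist_eq_norm]
      exact hbdist
    have hsq : ‖S ((f : H) + (g' : H))‖ ^ 2 < ε := by
      have h0 : (0:ℝ) ≤ ‖S ((f : H) + (g' : H))‖ := norm_nonneg _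
      nlinarith [Real.sq_sqrt hε.le, Real.sqrt_nonneg ε]
    calc (⨅ g : Kᗮ, F g) ≤ F g' := ciInf_le hbdd g'
      _ = (inner ℂ (M f) f : ℂ).re + ‖S ((f : H) + (g' : H))‖ ^ 2 := hFeq g'
      _ ≤ (inner ℂ (M f) f : ℂ).re + ε := by linarith
end
end

section
/- Let K be a complex Hilbert space and A, B bounded operators on K with A selfadjoint. The tridiagonal block Toeplitz operator T(A,B) on ℓ²(ℕ,K) is positive if and only if there exists a bounded operator M on K such that the 2×2 block operator [[A−M, B*],[B, M]] on K ⊕ K is positive. -/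
set_option maxHeartbeats 1000000
set_option synthInstance.maxHeartbeats 400000
set_option linter.unusedSectionVars false

open ContinuousLinearMap
open scoped ComplexOrder

noncomputable section

variable {K : Type*} [NormedAddCommGroup K] [InnerProductSpace ℂ K] [CompleteSpace K]

/-- Positivity of the 2×2 block operator `[[A-M, B*],[B, M]]` on `K ⊕ K`:
`⟨(A-M)x,x⟩ + 2 Re⟨Bx,y⟩ + ⟨My,y⟩ ≥ 0` for all `x, y ∈ K`. -/
def BlockPos (A B M : K →L[ℂ] K) : Prop :=
  ∀ x y : K,
    0 ≤ (inner ℂ ((A - M) x) x : ℂ) + ((2 * (inner ℂ (B x) y : ℂ).re : ℝ) : ℂ) + (inner ℂ (M y) y : ℂ)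

local notation "⟪" x ", " y "⟫" => (inner ℂ x y : ℂ)

def emb (c : ℕ → K) (n : ℕ) : lp (fun _ : ℕ => K) 2 :=
  ∑ j ∈ Finset.range n, lp.single 2 j (c j)

def Qf (T : lp (fun _ : ℕ => K) 2 →L[ℂ] lp (fun _ : ℕ => K) 2) (c : ℕ → K) (n : ℕ) : ℝ :=
  (⟪T (emb c n), emb c n⟫).re

section Aux

variable (A B : K →L[ℂ] K)
variable (T : lp (fun _ : ℕ => K) 2 →L[ℂ] lp (fun _ : ℕ => K) 2)
variable (hT : ∀ (j k : ℕ) (x y : K),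
      (inner ℂ (T (lp.single 2 k x)) (lp.single 2 j y) : ℂ) =
        if j = k then (inner ℂ (A x) y : ℂ)
        else if j = k + 1 then (inner ℂ (B x) y : ℂ)
        else if k = j + 1 then (inner ℂ ((adjoint B) x) y : ℂ)
        else 0)

include hT in
lemma Qform (c : ℕ → K) (n : ℕ) :
    Qf T c n = (∑ j ∈ Finset.range n, (⟪A (c j), c j⟫).re)
      + ∑ j ∈ Finset.range (n-1), 2 * (⟪B (c j), c (j+1)⟫).re := by
  have expand : ⟪T (emb c n), emb c n⟫ =
      ∑ k ∈ Finset.range n, ∑ j ∈ Finset.range n,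
        (if j = k then ⟪A (c k), c j⟫
          else if j = k+1 then ⟪B (c k), c j⟫
          else if k = j+1 then ⟪(adjoint B) (c k), c j⟫ else 0) := by
    rw [emb, map_sum, sum_inner]
    refine Finset.sum_congr rfl fun k hk => ?_
    rw [inner_sum]
    exact Finset.sum_congr rfl fun j hj => hT j k (c k) (c j)
  have split : ∀ k j : ℕ,
      (if j = k then ⟪A (c k), c j⟫
        else if j = k+1 then ⟪B (c k), c j⟫
        else if k = j+1 then ⟪(adjoint B) (c k), c j⟫ else 0)
      = (if j = k then ⟪A (c k), c j⟫ else 0)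
        + (if j = k+1 then ⟪B (c k), c j⟫ else 0)
        + (if k = j+1 then ⟪(adjoint B) (c k), c j⟫ else 0) := by
    intro k j
    split_ifs
    all_goals try (exfalso; omega)
    all_goals ring
  rw [Finset.sum_congr rfl (fun k _ => Finset.sum_congr rfl fun j _ => split k j)] at expand
  simp only [Finset.sum_add_distrib] at expand
  have S1 : ∀ k ∈ Finset.range n,
      (∑ j ∈ Finset.range n, if j = k then ⟪A (c k), c j⟫ else 0) = ⟪A (c k), c k⟫ := by
    intro k hk
    rw [Finset.sum_ite_eq' (Finset.range n) k (fun j => ⟪A (c k), c j⟫), if_pos hk]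
  have S2 : (∑ k ∈ Finset.range n, ∑ j ∈ Finset.range n,
      if j = k+1 then ⟪B (c k), c j⟫ else 0)
      = ∑ k ∈ Finset.range (n-1), ⟪B (c k), c (k+1)⟫ := by
    have e1 : ∀ k : ℕ, (∑ j ∈ Finset.range n, if j = k+1 then ⟪B (c k), c j⟫ else 0)
        = if k+1 ∈ Finset.range n then ⟪B (c k), c (k+1)⟫ else 0 := fun k =>
      Finset.sum_ite_eq' (Finset.range n) (k+1) (fun j => ⟪B (c k), c j⟫)
    simp only [e1, Finset.mem_range]
    rw [← Finset.sum_subset (Finset.range_subset_range.2 (Nat.sub_le n 1))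
      (fun x _ hx' => by rw [if_neg]; simp only [Finset.mem_range] at *; omega)]
    exact Finset.sum_congr rfl fun x hx => by
      rw [if_pos]; simp only [Finset.mem_range] at hx; omega
  have S3 : (∑ k ∈ Finset.range n, ∑ j ∈ Finset.range n,
      if k = j+1 then ⟪(adjoint B) (c k), c j⟫ else 0)
      = ∑ j ∈ Finset.range (n-1), ⟪(adjoint B) (c (j+1)), c j⟫ := by
    rw [Finset.sum_comm]
    have e1 : ∀ j : ℕ, (∑ k ∈ Finset.range n, if k = j+1 then ⟪(adjoint B) (c k), c j⟫ else 0)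
        = if j+1 ∈ Finset.range n then ⟪(adjoint B) (c (j+1)), c j⟫ else 0 := fun j =>
      Finset.sum_ite_eq' (Finset.range n) (j+1) (fun k => ⟪(adjoint B) (c k), c j⟫)
    simp only [e1, Finset.mem_range]
    rw [← Finset.sum_subset (Finset.range_subset_range.2 (Nat.sub_le n 1))
      (fun x _ hx' => by rw [if_neg]; simp only [Finset.mem_range] at *; omega)]
    exact Finset.sum_congr rfl fun x hx => by
      rw [if_pos]; simp only [Finset.mem_range] at hx; omega
  rw [Finset.sum_congr rfl S1, S2, S3] at expand
  have : Qf T c n = (∑ k ∈ Finset.range n, ⟪A (c k), c k⟫).re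
      + ((∑ k ∈ Finset.range (n-1), ⟪B (c k), c (k+1)⟫).re
      + (∑ j ∈ Finset.range (n-1), ⟪(adjoint B) (c (j+1)), c j⟫).re) := by
    rw [Qf, expand]; simp only [Complex.add_re]; ring
  rw [this]
  simp only [Complex.re_sum]
  rw [← Finset.sum_add_distrib]
  congr 1
  refine Finset.sum_congr rfl fun j _ => ?_
  rw [ContinuousLinearMap.adjoint_inner_left,
    show (inner ℂ (c (j+1)) (B (c j)) : ℂ) = (starRingEnd ℂ) (inner ℂ (B (c j)) (c (j+1)) : ℂ) from
      (inner_conj_symm _ _).symm, Complex.conj_re]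
  ring


lemma lp_single_zero (j : ℕ) : (lp.single 2 j (0:K) : lp (fun _ : ℕ => K) 2) = 0 := by
  have := lp.single_smul (E := fun _ : ℕ => K) 2 j (0:ℂ) (0:K)
  simpa using this

lemma emb_congr (c d : ℕ → K) (n : ℕ) (h : ∀ j, j < n → c j = d j) : emb c n = emb d n :=
  Finset.sum_congr rfl fun j hj => by rw [h j (Finset.mem_range.1 hj)]

lemma emb_pad (c : ℕ → K) (m n : ℕ) (h : m ≤ n) (h0 : ∀ j, m ≤ j → c j = 0) :
    emb c n = emb c m := by
  refine (Finset.sum_subset (Finset.range_subset_range.2 h) fun x _ hx' => ?_).symm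
  rw [h0 x (by simpa [Finset.mem_range, not_lt] using hx'), lp_single_zero]

lemma Qf_congr (c d : ℕ → K) (n : ℕ) (h : ∀ j, j < n → c j = d j) : Qf T c n = Qf T d n := by
  rw [Qf, Qf, emb_congr c d n h]

lemma Qf_pad (c : ℕ → K) (m n : ℕ) (h : m ≤ n) (h0 : ∀ j, m ≤ j → c j = 0) :
    Qf T c n = Qf T c m := by
  rw [Qf, Qf, emb_pad c m n h h0]

include hT in
lemma Qf_one (c : ℕ → K) : Qf T c 1 = (⟪A (c 0), c 0⟫).re := by
  have : emb c 1 = lp.single 2 0 (c 0) := by rw [emb, Finset.sum_range_one]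
  rw [Qf, this, hT 0 0 (c 0) (c 0)]
  simp

include hT in
lemma Qf_succ (c : ℕ → K) (n : ℕ) (hn : 1 ≤ n) :
    Qf T c (n+1) = (⟪A (c 0), c 0⟫).re + 2*(⟪B (c 0), c 1⟫).re
      + Qf T (fun j => c (j+1)) n := by
  obtain ⟨m, rfl⟩ : ∃ m, n = m + 1 := ⟨n - 1, by omega⟩
  rw [Qform A B T hT, Qform A B T hT]
  simp only [Nat.add_sub_cancel]
  rw [Finset.sum_range_succ' (fun j => (⟪A (c j), c j⟫).re) (m+1),
    Finset.sum_range_succ' (fun j => 2*(⟪B (c j), c (j+1)⟫).re) m]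
  ring

lemma Qf_nonneg (hpos : T.IsPositive) (c : ℕ → K) (n : ℕ) : 0 ≤ Qf T c n := by
  have := hpos.2 (emb c n)
  rwa [ContinuousLinearMap.reApplyInnerSelf_apply, RCLike.re_to_complex] at this

end Aux

lemma re_inner_smul_one (ε : ℝ) (x : K) :
    (⟪(((ε:ℂ))•(1:K→L[ℂ]K)) x, x⟫).re = ε * ‖x‖^2 := by
  simp only [ContinuousLinearMap.smul_apply, ContinuousLinearMap.one_apply, inner_smul_left,
    Complex.conj_ofReal]
  have h1 : (⟪x,x⟫ : ℂ).re = ‖x‖^2 := by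
    rw [← RCLike.re_to_complex]; exact inner_self_eq_norm_sq x
  have h2 : (⟪x,x⟫ : ℂ).im = 0 := by
    rw [← RCLike.im_to_complex]; exact inner_self_im x
  simp only [Complex.mul_re, h1, h2, Complex.ofReal_re, Complex.ofReal_im]
  ring

lemma completing_id (Mp : K →L[ℂ] K) (hsa : IsSelfAdjoint Mp) (hunit : IsUnit Mp)
    (B : K →L[ℂ] K) (x y : K) :
    (⟪(adjoint B ∘L Ring.inverse Mp ∘L B) x, x⟫).re + 2*(⟪B x, y⟫).re + (⟪Mp y, y⟫).re
      = (⟪Mp (y + Ring.inverse Mp (B x)), y + Ring.inverse Mp (B x)⟫).re := by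
  set N := Ring.inverse Mp with hN
  set w := N (B x) with hw
  have hMpw : Mp w = B x := by
    have h1 : Mp * N = 1 := Ring.mul_inverse_cancel Mp hunit
    calc Mp w = (Mp * N) (B x) := rfl
    _ = B x := by rw [h1]; rfl
  have hadj : ContinuousLinearMap.adjoint Mp = Mp := by
    rwa [← ContinuousLinearMap.star_eq_adjoint]
  have expand : ⟪Mp (y + w), y + w⟫
      = ⟪Mp y, y⟫ + ⟪Mp y, w⟫ + (⟪B x, y⟫ + ⟪B x, w⟫) := by
    rw [map_add, inner_add_left, inner_add_right, inner_add_right, hMpw]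
  have h2 : ⟪Mp y, w⟫ = (starRingEnd ℂ) ⟪B x, y⟫ := by
    rw [← hadj, ContinuousLinearMap.adjoint_inner_left, hMpw, ← inner_conj_symm]
  have h3 : (⟪(adjoint B ∘L N ∘L B) x, x⟫ : ℂ) = (starRingEnd ℂ) ⟪B x, w⟫ := by
    rw [ContinuousLinearMap.comp_apply, ContinuousLinearMap.comp_apply,
      ContinuousLinearMap.adjoint_inner_left, ← hw, ← inner_conj_symm]
  rw [expand, h3]
  simp only [Complex.add_re, h2, Complex.conj_re]
  ring

lemma completing_le (Mp : K →L[ℂ] K) (hsa : IsSelfAdjoint Mp) (hunit : IsUnit Mp)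
    (hpos0 : ∀ z, 0 ≤ (⟪Mp z, z⟫).re) (B : K →L[ℂ] K) (x y : K) :
    -(⟪(adjoint B ∘L Ring.inverse Mp ∘L B) x, x⟫).re ≤ 2*(⟪B x, y⟫).re + (⟪Mp y, y⟫).re := by
  have := completing_id Mp hsa hunit B x y
  have h0 := hpos0 (y + Ring.inverse Mp (B x))
  linarith

lemma completing_eq (Mp : K →L[ℂ] K) (hsa : IsSelfAdjoint Mp) (hunit : IsUnit Mp)
    (B : K →L[ℂ] K) (x : K) :
    -(⟪(adjoint B ∘L Ring.inverse Mp ∘L B) x, x⟫).re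
      = 2*(⟪B x, -(Ring.inverse Mp (B x))⟫).re + (⟪Mp (-(Ring.inverse Mp (B x))), -(Ring.inverse Mp (B x))⟫).re := by
  have := completing_id Mp hsa hunit B x (-(Ring.inverse Mp (B x)))
  rw [neg_add_cancel] at this
  simp only [inner_zero_right, map_zero, Complex.zero_re] at this
  linarith

def schurSeq (A B : K →L[ℂ] K) (ε : ℝ) : ℕ → (K →L[ℂ] K)
  | 0 => A + (ε:ℂ) • 1
  | k+1 => A + (ε:ℂ) • 1 - adjoint B ∘L Ring.inverse (schurSeq A B ε k) ∘L B

section Main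

variable (A B : K →L[ℂ] K)
variable (T : lp (fun _ : ℕ => K) 2 →L[ℂ] lp (fun _ : ℕ => K) 2)
variable (hT : ∀ (j k : ℕ) (x y : K),
      (inner ℂ (T (lp.single 2 k x)) (lp.single 2 j y) : ℂ) =
        if j = k then (inner ℂ (A x) y : ℂ)
        else if j = k + 1 then (inner ℂ (B x) y : ℂ)
        else if k = j + 1 then (inner ℂ ((adjoint B) x) y : ℂ)
        else 0)

lemma sa_aux (hA : IsSelfAdjoint A) (ε : ℝ) : IsSelfAdjoint (A + (ε:ℂ) • (1:K→L[ℂ]K)) := by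
  refine hA.add ?_
  simp [IsSelfAdjoint, star_smul, Complex.star_def, Complex.conj_ofReal]

include hT in
lemma schur_main (hA : IsSelfAdjoint A) (hpos : T.IsPositive) (ε : ℝ) (hε : 0 < ε) (k : ℕ) :
    IsSelfAdjoint (schurSeq A B ε k) ∧ IsUnit (schurSeq A B ε k) ∧
    (∀ c : ℕ → K, (⟪schurSeq A B ε k (c 0), c 0⟫).re
        ≤ Qf T c (k+1) + ε * ∑ j ∈ Finset.range (k+1), ‖c j‖^2) ∧
    (∀ x : K, ∃ c : ℕ → K, c 0 = x ∧ (⟪schurSeq A B ε k x, x⟫).re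
        = Qf T c (k+1) + ε * ∑ j ∈ Finset.range (k+1), ‖c j‖^2) := by
  -- helper : coercivity follows from the last two clauses
  have key_coer : ∀ m : ℕ,
      (∀ x : K, ∃ c : ℕ → K, c 0 = x ∧ (⟪schurSeq A B ε m x, x⟫).re
        = Qf T c (m+1) + ε * ∑ j ∈ Finset.range (m+1), ‖c j‖^2) →
      ∀ x : K, ε * ‖x‖^2 ≤ (⟪schurSeq A B ε m x, x⟫).re := by
    intro m hat x
    obtain ⟨c, hc0, hc⟩ := hat x
    have h1 : 0 ≤ Qf T c (m+1) := Qf_nonneg T hpos c (m+1)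
    have h2 : ‖x‖^2 ≤ ∑ j ∈ Finset.range (m+1), ‖c j‖^2 := by
      rw [← hc0]
      exact Finset.single_le_sum (f := fun j => ‖c j‖^2)
        (fun j _ => sq_nonneg _) (Finset.mem_range.2 (Nat.succ_pos m))
    nlinarith
  induction k with
  | zero =>
    have hsa := sa_aux A hA ε
    have upper : ∀ c : ℕ → K, (⟪schurSeq A B ε 0 (c 0), c 0⟫).re
        = Qf T c 1 + ε * ∑ j ∈ Finset.range 1, ‖c j‖^2 := by
      intro c
      rw [Qf_one A B T hT c, Finset.sum_range_one, schurSeq]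
      rw [ContinuousLinearMap.add_apply, inner_add_left, Complex.add_re, re_inner_smul_one]
    have hat : ∀ x : K, ∃ c : ℕ → K, c 0 = x ∧ (⟪schurSeq A B ε 0 x, x⟫).re
        = Qf T c 1 + ε * ∑ j ∈ Finset.range 1, ‖c j‖^2 := by
      intro x
      exact ⟨fun _ => x, rfl, upper (fun _ => x)⟩
    refine ⟨hsa, ?_, fun c => le_of_eq (upper c), hat⟩
    · have coer := key_coer 0 hat
      refine isUnit_of_forall_le_norm_inner_map _ (c := ⟨ε, hε.le⟩) (by exact_mod_cast hε) ?_
      intro x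
      calc ‖x‖^2 * ε = ε * ‖x‖^2 := by ring
      _ ≤ (⟪schurSeq A B ε 0 x, x⟫).re := coer x
      _ ≤ |(⟪schurSeq A B ε 0 x, x⟫).re| := le_abs_self _
      _ ≤ ‖(⟪schurSeq A B ε 0 x, x⟫ : ℂ)‖ := Complex.abs_re_le_norm _
  | succ k ih =>
    obtain ⟨ihsa, ihunit, ihupper, ihat⟩ := ih
    have ihcoer := key_coer k ihat
    have ihpos0 : ∀ z, 0 ≤ (⟪schurSeq A B ε k z, z⟫).re := by
      intro z; have := ihcoer z; nlinarith [sq_nonneg ‖z‖]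
    set Mp := schurSeq A B ε k with hMp
    -- self adjointness
    have hNsa : IsSelfAdjoint (Ring.inverse Mp) := by
      rw [IsSelfAdjoint, ← Ring.inverse_star, ihsa.star_eq]
    have hsa : IsSelfAdjoint (schurSeq A B ε (k+1)) := by
      rw [schurSeq]
      exact (sa_aux A hA ε).sub (hNsa.adjoint_conj B)
    -- value formula
    have hval : ∀ x : K, (⟪schurSeq A B ε (k+1) x, x⟫).re
        = (⟪A x, x⟫).re + ε * ‖x‖^2 - (⟪(adjoint B ∘L Ring.inverse Mp ∘L B) x, x⟫).re := by
      intro x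
      rw [schurSeq]
      rw [ContinuousLinearMap.sub_apply, ContinuousLinearMap.add_apply, inner_sub_left,
        inner_add_left, Complex.sub_re, Complex.add_re, re_inner_smul_one]
    -- upper bound
    have upper : ∀ c : ℕ → K, (⟪schurSeq A B ε (k+1) (c 0), c 0⟫).re
        ≤ Qf T c (k+2) + ε * ∑ j ∈ Finset.range (k+2), ‖c j‖^2 := by
      intro c
      have hle := completing_le Mp ihsa ihunit ihpos0 B (c 0) (c 1)
      have hup := ihupper (fun j => c (j+1))
      have hq := Qf_succ A B T hT c (k+1) (Nat.succ_le_succ (Nat.zero_le k))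
      have hsum : ∑ j ∈ Finset.range (k+2), ‖c j‖^2
          = (∑ j ∈ Finset.range (k+1), ‖c (j+1)‖^2) + ‖c 0‖^2 :=
        Finset.sum_range_succ' (fun j => ‖c j‖^2) (k+1)
      rw [hval, hq, hsum]
      have := hup
      linarith
    -- attainment
    have hat : ∀ x : K, ∃ c : ℕ → K, c 0 = x ∧ (⟪schurSeq A B ε (k+1) x, x⟫).re
        = Qf T c (k+2) + ε * ∑ j ∈ Finset.range (k+2), ‖c j‖^2 := by
      intro x
      set y := -(Ring.inverse Mp (B x)) with hy
      obtain ⟨c', hc'0, hc'⟩ := ihat y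
      refine ⟨fun j => Nat.casesOn j x (fun m => c' m), rfl, ?_⟩
      have heq := completing_eq Mp ihsa ihunit B x
      rw [← hy] at heq
      have hq := Qf_succ A B T hT (fun j => Nat.casesOn j x (fun m => c' m)) (k+1)
        (Nat.succ_le_succ (Nat.zero_le k))
      have hsum : ∑ j ∈ Finset.range (k+2), ‖(fun j => Nat.casesOn j x (fun m => c' m) : ℕ → K) j‖^2
          = (∑ j ∈ Finset.range (k+1), ‖c' j‖^2) + ‖x‖^2 :=
        Finset.sum_range_succ' (fun j => ‖(fun j => Nat.casesOn j x (fun m => c' m) : ℕ → K) j‖^2) (k+1)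
      have hshift : (fun j => (fun j => Nat.casesOn j x (fun m => c' m) : ℕ → K) (j+1)) = c' := rfl
      rw [hshift] at hq
      have h0 : ((fun j => Nat.casesOn j x (fun m => c' m) : ℕ → K) 0) = x := rfl
      have h1 : ((fun j => Nat.casesOn j x (fun m => c' m) : ℕ → K) 1) = c' 0 := rfl
      change _ = (⟪A x, x⟫).re + 2*(⟪B x, c' 0⟫).re + _ at hq
      rw [hc'0] at hq
      rw [hval, hq, hsum]
      linarith [heq, hc']
    refine ⟨hsa, ?_, upper, hat⟩
    have coer := key_coer (k+1) hat
    refine isUnit_of_forall_le_norm_inner_map _ (c := ⟨ε, hε.le⟩) (by exact_mod_cast hε) ?_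
    intro x
    calc ‖x‖^2 * ε = ε * ‖x‖^2 := by ring
    _ ≤ (⟪schurSeq A B ε (k+1) x, x⟫).re := coer x
    _ ≤ |(⟪schurSeq A B ε (k+1) x, x⟫).re| := le_abs_self _
    _ ≤ ‖(⟪schurSeq A B ε (k+1) x, x⟫ : ℂ)‖ := Complex.abs_re_le_norm _

include hT in
lemma schur_coer (hA : IsSelfAdjoint A) (hpos : T.IsPositive) {ε : ℝ} (hε : 0 < ε) (k : ℕ)
    (x : K) : ε * ‖x‖^2 ≤ (⟪schurSeq A B ε k x, x⟫).re := by
  obtain ⟨c, hc0, hc⟩ := (schur_main A B T hT hA hpos ε hε k).2.2.2 x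
  have h1 : 0 ≤ Qf T c (k+1) := Qf_nonneg T hpos c (k+1)
  have h2 : ‖x‖^2 ≤ ∑ j ∈ Finset.range (k+1), ‖c j‖^2 := by
    rw [← hc0]
    exact Finset.single_le_sum (f := fun j => ‖c j‖^2)
      (fun j _ => sq_nonneg _) (Finset.mem_range.2 (Nat.succ_pos k))
  nlinarith

include hT in
lemma schur_pos0 (hA : IsSelfAdjoint A) (hpos : T.IsPositive) {ε : ℝ} (hε : 0 < ε) (k : ℕ)
    (z : K) : 0 ≤ (⟪schurSeq A B ε k z, z⟫).re := by
  have := schur_coer A B T hT hA hpos hε k z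
  nlinarith [sq_nonneg ‖z‖]

include hT in
lemma schur_mono (hA : IsSelfAdjoint A) (hpos : T.IsPositive) {ε ε' : ℝ} (hε' : 0 < ε')
    (hle : ε' ≤ ε) {k k' : ℕ} (hk : k ≤ k') (x : K) :
    (⟪schurSeq A B ε' k' x, x⟫).re ≤ (⟪schurSeq A B ε k x, x⟫).re := by
  have hε : 0 < ε := lt_of_lt_of_le hε' hle
  obtain ⟨c, hc0, hc⟩ := (schur_main A B T hT hA hpos ε hε k).2.2.2 x
  set cpad : ℕ → K := fun j => if j < k+1 then c j else 0 with hcpad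
  have hup := (schur_main A B T hT hA hpos ε' hε' k').2.2.1 cpad
  have hc0' : cpad 0 = x := by rw [hcpad]; simp [hc0]
  rw [hc0'] at hup
  have hQ : Qf T cpad (k'+1) = Qf T c (k+1) := by
    rw [Qf_pad T cpad (k+1) (k'+1) (by omega) (fun j hj => by simp [hcpad, show ¬ j ≤ k by omega, if_neg]),
      Qf_congr T cpad c (k+1) (fun j hj => by simp [hcpad, show j ≤ k by omega])]
  have hS : ∑ j ∈ Finset.range (k'+1), ‖cpad j‖^2 = ∑ j ∈ Finset.range (k+1), ‖c j‖^2 := by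
    rw [← Finset.sum_subset (Finset.range_subset_range.2 (by omega : k+1 ≤ k'+1))
      (fun j _ hj => by
        simp only [Finset.mem_range, not_lt] at hj
        simp [hcpad, show ¬ j ≤ k by omega])]
    exact Finset.sum_congr rfl fun j hj => by
      simp only [Finset.mem_range] at hj
      simp [hcpad, show j ≤ k by omega]
  have hSnn : 0 ≤ ∑ j ∈ Finset.range (k+1), ‖c j‖^2 :=
    Finset.sum_nonneg fun j _ => sq_nonneg _
  rw [hQ, hS] at hup
  nlinarith

include hT in
lemma schur_le_A (hA : IsSelfAdjoint A) (hpos : T.IsPositive) {ε : ℝ} (hε : 0 < ε) (k : ℕ)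
    (x : K) : (⟪schurSeq A B ε k x, x⟫).re ≤ (⟪A x, x⟫).re + ε * ‖x‖^2 := by
  set c : ℕ → K := fun j => if j = 0 then x else 0 with hc
  have hup := (schur_main A B T hT hA hpos ε hε k).2.2.1 c
  have hc0 : c 0 = x := by simp [hc]
  rw [hc0] at hup
  have hQ : Qf T c (k+1) = (⟪A x, x⟫).re := by
    rw [Qf_pad T c 1 (k+1) (by omega) (fun j hj => by simp [hc, Nat.pos_iff_ne_zero.1 hj]),
      Qf_one A B T hT c, hc0]
  have hS : ∑ j ∈ Finset.range (k+1), ‖c j‖^2 = ‖x‖^2 := by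
    rw [show (∑ j ∈ Finset.range (k+1), ‖c j‖^2) = ∑ j ∈ Finset.range (k+1),
        if j = 0 then ‖x‖^2 else 0 from Finset.sum_congr rfl fun j _ => by
          by_cases h : j = 0 <;> simp [hc, h]]
    rw [Finset.sum_ite_eq' (Finset.range (k+1)) 0 (fun _ => ‖x‖^2)]
    simp
  rw [hQ, hS] at hup
  exact hup

include hT in
lemma schur_step (hA : IsSelfAdjoint A) (hpos : T.IsPositive) {ε : ℝ} (hε : 0 < ε) (k : ℕ)
    (x y : K) : (⟪schurSeq A B ε (k+1) x, x⟫).re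
      ≤ (⟪A x, x⟫).re + ε * ‖x‖^2 + 2*(⟪B x, y⟫).re + (⟪schurSeq A B ε k y, y⟫).re := by
  obtain ⟨ihsa, ihunit, -, -⟩ := schur_main A B T hT hA hpos ε hε k
  have hle := completing_le (schurSeq A B ε k) ihsa ihunit
    (schur_pos0 A B T hT hA hpos hε k) B x y
  have hval : (⟪schurSeq A B ε (k+1) x, x⟫).re
      = (⟪A x, x⟫).re + ε * ‖x‖^2
        - (⟪(adjoint B ∘L Ring.inverse (schurSeq A B ε k) ∘L B) x, x⟫).re := by
    rw [schurSeq]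
    rw [ContinuousLinearMap.sub_apply, ContinuousLinearMap.add_apply, inner_sub_left,
      inner_add_left, Complex.sub_re, Complex.add_re, re_inner_smul_one]
  linarith

/-- Cauchy-Schwarz for a positive selfadjoint operator. -/
lemma cs_pos (S : K →L[ℂ] K) (hS : IsSelfAdjoint S) (h0 : ∀ z, 0 ≤ (⟪S z, z⟫).re) (x y : K) :
    ‖(⟪S x, y⟫ : ℂ)‖^2 ≤ (⟪S x, x⟫).re * (⟪S y, y⟫).re := by
  have hsym : ∀ u v : K, (⟪S v, u⟫ : ℂ) = (starRingEnd ℂ) ⟪S u, v⟫ := by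
    intro u v
    rw [← hS.adjoint_eq, ContinuousLinearMap.adjoint_inner_left, ← inner_conj_symm,
      hS.adjoint_eq]
  have expand : ∀ (u v : K) (t : ℝ), (⟪S (u - (t:ℂ)•v), u - (t:ℂ)•v⟫ : ℂ).re
      = (⟪S u, u⟫).re - 2*t*(⟪S u, v⟫).re + t^2*(⟪S v, v⟫).re := by
    intro u v t
    rw [map_sub, map_smul, inner_sub_left, inner_sub_right, inner_sub_right,
      inner_smul_left, inner_smul_right, inner_smul_left, inner_smul_right, hsym u v,
      Complex.conj_ofReal]
    simp only [Complex.sub_re, Complex.add_re, Complex.mul_re, Complex.conj_re,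
      Complex.conj_im, Complex.ofReal_re, Complex.ofReal_im]
    ring
  set z : ℂ := ⟪S x, y⟫ with hz
  by_cases hz0 : z = 0
  · rw [hz0]
    simpa using mul_nonneg (h0 x) (h0 y)
  · have hzn : (‖z‖:ℂ) ≠ 0 := Complex.ofReal_ne_zero.2 (norm_ne_zero_iff.2 hz0)
    set c : ℂ := (starRingEnd ℂ) z / ‖z‖ with hc
    have hzz : z * (starRingEnd ℂ) z = (‖z‖:ℂ)^2 := by
      rw [Complex.mul_conj, Complex.normSq_eq_norm_sq]
      push_cast
      ring
    have hcz : c * z = (‖z‖:ℂ) := by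
      rw [hc, div_mul_eq_mul_div, mul_comm, hzz, sq, mul_div_assoc, div_self hzn, mul_one]
    have hcc : (starRingEnd ℂ) c * c = 1 := by
      rw [hc]
      rw [map_div₀, Complex.conj_conj, Complex.conj_ofReal]
      rw [div_mul_div_comm, mul_comm z ((starRingEnd ℂ) z), mul_comm ((starRingEnd ℂ) z) z, hzz]
      rw [sq, div_self (by simpa using hzn)]
    set y' : K := c • y with hy'
    have e1 : (⟪S x, y'⟫ : ℂ).re = ‖z‖ := by
      rw [hy', inner_smul_right, ← hz, hcz, Complex.ofReal_re]
    have e2 : (⟪S y', y'⟫ : ℂ).re = (⟪S y, y⟫).re := by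
      rw [hy', map_smul, inner_smul_left, inner_smul_right, ← mul_assoc, hcc, one_mul]
    have key : ∀ t : ℝ, 0 ≤ (⟪S x, x⟫).re - 2 * t * ‖z‖ + t^2 * (⟪S y, y⟫).re := by
      intro t
      have h := h0 (x - (t : ℂ) • y')
      rw [expand x y' t, e1, e2] at h
      exact h
    by_cases hb : (⟪S y, y⟫).re = 0
    · exfalso
      have hznorm : 0 < ‖z‖ := norm_pos_iff.2 hz0
      have h := key ((((⟪S x, x⟫).re) + 1) / (2 * ‖z‖))
      rw [hb] at h
      have hdiv : (((⟪S x, x⟫).re) + 1) / (2 * ‖z‖) * ‖z‖ = (((⟪S x, x⟫).re) + 1) / 2 := by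
        rw [div_mul_eq_mul_div, mul_comm (2:ℝ) ‖z‖, ← div_div, mul_div_assoc,
          div_self (ne_of_gt hznorm), mul_one]
      nlinarith
    · have hbpos : 0 < (⟪S y, y⟫).re := lt_of_le_of_ne (h0 y) (Ne.symm hb)
      set a : ℝ := (⟪S x, x⟫).re with ha
      set b : ℝ := (⟪S y, y⟫).re with hbb
      set t : ℝ := ‖z‖ / b with htd
      have ht : t * b = ‖z‖ := div_mul_cancel₀ _ (ne_of_gt hbpos)
      have h := key t
      have h6 : (2*t*‖z‖ - t^2*b) * b ≤ a * b :=
        mul_le_mul_of_nonneg_right (by linarith) hbpos.le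
      have h7 : (2*t*‖z‖ - t^2*b) * b = ‖z‖^2 := by
        linear_combination (‖z‖ - t*b) * ht
      linarith [h6, h7]

/-- polarization identity for a selfadjoint operator. -/
lemma polar (S : K →L[ℂ] K) (hS : IsSelfAdjoint S) (x y : K) :
    (⟪S x, y⟫ : ℂ)
      = (((((⟪S (x+y), x+y⟫).re - (⟪S x, x⟫).re - (⟪S y, y⟫).re)/2 : ℝ)) : ℂ)
        + ((((-((⟪S (x + Complex.I • y), x + Complex.I • y⟫).re - (⟪S x, x⟫).re
            - (⟪S y, y⟫).re))/2 : ℝ)) : ℂ) * Complex.I := by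
  have hsym : ∀ u v : K, (⟪S v, u⟫ : ℂ) = (starRingEnd ℂ) ⟪S u, v⟫ := by
    intro u v
    rw [← hS.adjoint_eq, ContinuousLinearMap.adjoint_inner_left, ← inner_conj_symm,
      hS.adjoint_eq]
  have e1 : (⟪S (x+y), x+y⟫ : ℂ).re = (⟪S x, x⟫).re + (⟪S y, y⟫).re + 2*(⟪S x, y⟫).re := by
    rw [map_add, inner_add_left, inner_add_right, inner_add_right, hsym x y]
    simp only [Complex.add_re, Complex.conj_re]
    ring
  have e2 : (⟪S (x + Complex.I • y), x + Complex.I • y⟫ : ℂ).re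
      = (⟪S x, x⟫).re + (⟪S y, y⟫).re - 2*(⟪S x, y⟫).im := by
    rw [map_add, inner_add_left, inner_add_right, inner_add_right]
    rw [map_smul, inner_smul_left, inner_smul_right, inner_smul_left, inner_smul_right]
    rw [hsym x y]
    simp only [Complex.add_re, Complex.mul_re, Complex.mul_im, Complex.conj_re, Complex.conj_im,
      Complex.I_re, Complex.I_im, map_mul, Complex.conj_I, Complex.neg_re, Complex.neg_im]
    ring
  apply Complex.ext
  · simp only [Complex.add_re, Complex.ofReal_re, Complex.mul_re, Complex.I_re, Complex.I_im,
      Complex.ofReal_im]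
    rw [e1]
    ring
  · simp only [Complex.add_im, Complex.ofReal_im, Complex.mul_im, Complex.I_re, Complex.I_im,
      Complex.ofReal_re]
    rw [e2]
    ring

def epsn (n : ℕ) : ℝ := 1/((n:ℝ)+1)

lemma epsn_pos (n : ℕ) : 0 < epsn n := by
  have : (0:ℝ) < (n:ℝ)+1 := by positivity
  exact div_pos one_pos this

lemma epsn_anti {m n : ℕ} (h : m ≤ n) : epsn n ≤ epsn m := by
  apply div_le_div_of_nonneg_left one_pos.le
  · have : (0:ℝ) < (m:ℝ)+1 := by positivity
    exact this
  · have : (m:ℝ) ≤ (n:ℝ) := Nat.cast_le.2 h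
    linarith

lemma epsn_le_one (n : ℕ) : epsn n ≤ 1 := by
  rw [epsn, div_le_one (by positivity)]
  have : (0:ℝ) ≤ (n:ℝ) := Nat.cast_nonneg n
  linarith

def gseq (A B : K →L[ℂ] K) (n : ℕ) (x : K) : ℝ :=
  (⟪schurSeq A B (epsn n) n x, x⟫).re

include hT in
lemma g_anti (hA : IsSelfAdjoint A) (hpos : T.IsPositive) (x : K) :
    Antitone (fun n => gseq A B n x) := by
  apply antitone_nat_of_succ_le
  intro n
  exact schur_mono A B T hT hA hpos (epsn_pos (n+1)) (epsn_anti (Nat.le_succ n))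
    (Nat.le_succ n) x

include hT in
lemma g_nonneg (hA : IsSelfAdjoint A) (hpos : T.IsPositive) (n : ℕ) (x : K) :
    0 ≤ gseq A B n x :=
  schur_pos0 A B T hT hA hpos (epsn_pos n) n x

include hT in
lemma g_bound (hA : IsSelfAdjoint A) (hpos : T.IsPositive) (n : ℕ) (x : K) :
    gseq A B n x ≤ (‖A‖+1) * ‖x‖^2 := by
  have h1 := schur_le_A A B T hT hA hpos (epsn_pos n) n x
  have h2 : (⟪A x, x⟫ : ℂ).re ≤ ‖A‖ * ‖x‖^2 := by
    calc (⟪A x, x⟫ : ℂ).re ≤ |(⟪A x, x⟫ : ℂ).re| := le_abs_self _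
    _ ≤ ‖(⟪A x, x⟫ : ℂ)‖ := by exact Complex.abs_re_le_norm _
    _ ≤ ‖A x‖ * ‖x‖ := norm_inner_le_norm _ _
    _ ≤ ‖A‖ * ‖x‖ * ‖x‖ := mul_le_mul_of_nonneg_right (A.le_opNorm x) (norm_nonneg x)
    _ = ‖A‖ * ‖x‖^2 := by ring
  have h3 := epsn_le_one n
  have h4 := (epsn_pos n).le
  have h0 : gseq A B n x = (⟪schurSeq A B (epsn n) n x, x⟫).re := rfl
  have h5 : (0:ℝ) ≤ (1 - epsn n) * ‖x‖^2 :=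
    mul_nonneg (by linarith) (sq_nonneg _)
  rw [h0]
  nlinarith

include hT in
lemma g_step (hA : IsSelfAdjoint A) (hpos : T.IsPositive) (n : ℕ) (x y : K) :
    gseq A B (n+1) x ≤ (⟪A x, x⟫).re + epsn (n+1) * ‖x‖^2 + 2*(⟪B x, y⟫).re
      + gseq A B n y := by
  have h1 := schur_step A B T hT hA hpos (epsn_pos (n+1)) n x y
  have h2 : (⟪schurSeq A B (epsn (n+1)) n y, y⟫).re ≤ gseq A B n y :=
    schur_mono A B T hT hA hpos (epsn_pos (n+1)) (epsn_anti (Nat.le_succ n)) (le_refl n) y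
  have : gseq A B (n+1) x = (⟪schurSeq A B (epsn (n+1)) (n+1) x, x⟫).re := rfl
  linarith

lemma g_smul (n : ℕ) (c : ℂ) (x : K) :
    gseq A B n (c • x) = Complex.normSq c * gseq A B n x := by
  unfold gseq
  rw [map_smul, inner_smul_left, inner_smul_right, ← mul_assoc]
  rw [mul_comm ((starRingEnd ℂ) c) c, Complex.mul_conj]
  simp [Complex.mul_re]

include hT in
lemma g_cs (hA : IsSelfAdjoint A) (hpos : T.IsPositive) (n : ℕ) (x y : K) :
    ‖(⟪schurSeq A B (epsn n) n x, y⟫ : ℂ)‖ ≤ (‖A‖+1) * ‖x‖ * ‖y‖ := by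
  have hsa := (schur_main A B T hT hA hpos (epsn n) (epsn_pos n) n).1
  have hcs := cs_pos (schurSeq A B (epsn n) n) hsa
    (schur_pos0 A B T hT hA hpos (epsn_pos n) n) x y
  have hb1 := g_bound A B T hT hA hpos n x
  have hb2 := g_bound A B T hT hA hpos n y
  have hg1 := g_nonneg A B T hT hA hpos n x
  have hg2 := g_nonneg A B T hT hA hpos n y
  have hsq : ‖(⟪schurSeq A B (epsn n) n x, y⟫ : ℂ)‖^2 ≤ ((‖A‖+1) * ‖x‖ * ‖y‖)^2 := by
    have : gseq A B n x * gseq A B n y ≤ ((‖A‖+1) * ‖x‖^2) * ((‖A‖+1) * ‖y‖^2) := by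
      apply mul_le_mul hb1 hb2 hg2
      nlinarith [norm_nonneg A, sq_nonneg ‖x‖]
    calc ‖(⟪schurSeq A B (epsn n) n x, y⟫ : ℂ)‖^2 ≤ gseq A B n x * gseq A B n y := hcs
    _ ≤ ((‖A‖+1) * ‖x‖^2) * ((‖A‖+1) * ‖y‖^2) := this
    _ = ((‖A‖+1) * ‖x‖ * ‖y‖)^2 := by ring
  have hrn : (0:ℝ) ≤ (‖A‖+1) * ‖x‖ * ‖y‖ := by positivity
  calc ‖(⟪schurSeq A B (epsn n) n x, y⟫ : ℂ)‖
      = Real.sqrt (‖(⟪schurSeq A B (epsn n) n x, y⟫ : ℂ)‖^2) :=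
        (Real.sqrt_sq (norm_nonneg _)).symm
  _ ≤ Real.sqrt (((‖A‖+1) * ‖x‖ * ‖y‖)^2) := Real.sqrt_le_sqrt hsq
  _ = (‖A‖+1) * ‖x‖ * ‖y‖ := Real.sqrt_sq hrn

/-- Two operators on `ℓ²` agreeing on all `lp.single` agree. -/
lemma lp_ext_single (T₁ T₂ : lp (fun _ : ℕ => K) 2 →L[ℂ] lp (fun _ : ℕ => K) 2)
    (h : ∀ (k : ℕ) (x : K), T₁ (lp.single 2 k x) = T₂ (lp.single 2 k x)) : T₁ = T₂ := by
  refine ContinuousLinearMap.ext fun u => ?_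
  have h1 := (lp.hasSum_single (by norm_num : (2:ENNReal) ≠ ⊤) u).mapL T₁
  have h2 := (lp.hasSum_single (by norm_num : (2:ENNReal) ≠ ⊤) u).mapL T₂
  simp only [h] at h1
  exact h1.unique h2

lemma Qf_zero (c : ℕ → K) : Qf T c 0 = 0 := by
  rw [Qf, emb, Finset.range_zero, Finset.sum_empty]
  simp

include hT in
lemma Qf_nonneg_blockpos (M : K →L[ℂ] K) (hM : BlockPos A B M) (c : ℕ → K) (n : ℕ) :
    0 ≤ Qf T c n := by
  have hre : ∀ z w : K, 0 ≤ (⟪(A - M) z, z⟫ : ℂ).re + 2*(⟪B z, w⟫).re + (⟪M w, w⟫).re := by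
    intro z w
    have h := hM z w
    have := (Complex.nonneg_iff.1 h).1
    simpa [Complex.add_re, Complex.ofReal_re] using this
  have hAM : ∀ z : K, 0 ≤ (⟪A z, z⟫ : ℂ).re - (⟪M z, z⟫).re := by
    intro z
    have h := hre z 0
    simp only [inner_zero_right, Complex.zero_re, mul_zero, map_zero, add_zero] at h
    rwa [ContinuousLinearMap.sub_apply, inner_sub_left, Complex.sub_re] at h
  have hM0 : ∀ z : K, 0 ≤ (⟪M z, z⟫ : ℂ).re := by
    intro z
    have h := hre 0 z
    simpa using h
  have hblock : ∀ z w : K, 0 ≤ (⟪A z, z⟫ : ℂ).re - (⟪M z, z⟫).re + 2*(⟪B z, w⟫).re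
      + (⟪M w, w⟫).re := by
    intro z w
    have h := hre z w
    rwa [ContinuousLinearMap.sub_apply, inner_sub_left, Complex.sub_re] at h
  have claim : ∀ (m : ℕ) (d : ℕ → K), (⟪M (d 0), d 0⟫ : ℂ).re ≤ Qf T d (m+1) := by
    intro m
    induction m with
    | zero =>
      intro d
      rw [Qf_one A B T hT d]
      linarith [hAM (d 0)]
    | succ m ih =>
      intro d
      rw [Qf_succ A B T hT d (m+1) (Nat.succ_le_succ (Nat.zero_le m))]
      have h1 := ih (fun j => d (j+1))
      have h2 := hblock (d 0) (d 1)
      linarith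
  cases n with
  | zero => exact le_of_eq (Qf_zero T c).symm
  | succ m => linarith [hM0 (c 0), claim m c]

end Main

/-- **Positivity of the tridiagonal block Toeplitz operator.**
Let `A, B` be bounded operators on a complex Hilbert space `K` with `A` selfadjoint,
and let `T` be the tridiagonal block Toeplitz operator on `ℓ²(ℕ,K)` with diagonal entries
`A`, subdiagonal entries `B` and superdiagonal entries `B*` (specified here through its
matrix entries with respect to the canonical copies of `K`).  Then `T ≥ 0` if and only if
there is a bounded operator `M` on `K` with `[[A-M, B*],[B, M]] ≥ 0`. -/
theorem tridiagonal_toeplitz_positive_iff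
    (A B : K →L[ℂ] K) (hA : IsSelfAdjoint A)
    (T : lp (fun _ : ℕ => K) 2 →L[ℂ] lp (fun _ : ℕ => K) 2)
    (hT : ∀ (j k : ℕ) (x y : K),
      (inner ℂ (T (lp.single 2 k x)) (lp.single 2 j y) : ℂ) =
        if j = k then (inner ℂ (A x) y : ℂ)
        else if j = k + 1 then (inner ℂ (B x) y : ℂ)
        else if k = j + 1 then (inner ℂ ((adjoint B) x) y : ℂ)
        else 0) :
    T.IsPositive ↔ ∃ M : K →L[ℂ] K, BlockPos A B M := by
  constructor
  · -- hard direction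
    intro hpos
    obtain ⟨f, hconv⟩ : ∃ f : K → ℝ, ∀ x : K,
        Filter.Tendsto (fun n => gseq A B n x) Filter.atTop (nhds (f x)) := by
      refine ⟨fun x => ⨅ n, gseq A B n x, fun x => ?_⟩
      apply tendsto_atTop_ciInf (g_anti A B T hT hA hpos x)
      exact ⟨0, fun r hr => by obtain ⟨n, rfl⟩ := hr; exact g_nonneg A B T hT hA hpos n x⟩
    have hf0 : ∀ x, 0 ≤ f x := fun x =>
      ge_of_tendsto (hconv x) (Filter.Eventually.of_forall fun n =>
        g_nonneg A B T hT hA hpos n x)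
    have hfsmul : ∀ (c : ℂ) (x : K), f (c • x) = Complex.normSq c * f x := by
      intro c x
      refine tendsto_nhds_unique (hconv (c • x)) ?_
      exact ((hconv x).const_mul (Complex.normSq c)).congr
        fun n => (g_smul A B n c x).symm
    have hfstep : ∀ x y : K, f x ≤ (⟪A x, x⟫).re + 2*(⟪B x, y⟫).re + f y := by
      intro x y
      have hL : Filter.Tendsto (fun n => gseq A B (n+1) x) Filter.atTop (nhds (f x)) :=
        (hconv x).comp (Filter.tendsto_add_atTop_nat 1)
      have hE : Filter.Tendsto (fun n : ℕ => epsn (n+1)) Filter.atTop (nhds 0) :=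
        tendsto_one_div_add_atTop_nhds_zero_nat.comp (Filter.tendsto_add_atTop_nat 1)
      have hR : Filter.Tendsto
          (fun n => (⟪A x, x⟫ : ℂ).re + epsn (n+1)*‖x‖^2 + 2*(⟪B x, y⟫).re + gseq A B n y)
          Filter.atTop (nhds ((⟪A x, x⟫ : ℂ).re + 0*‖x‖^2 + 2*(⟪B x, y⟫).re + f y)) :=
        (((tendsto_const_nhds.add (hE.mul_const _)).add tendsto_const_nhds).add (hconv y))
      have hle := le_of_tendsto_of_tendsto' hL hR (fun n => g_step A B T hT hA hpos n x y)
      simpa using hle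
    set bf : K → K → ℂ := fun x y => ((((f (x+y) - f x - f y)/2 : ℝ) : ℂ)
      + (((-(f (x + Complex.I • y) - f x - f y))/2 : ℝ) : ℂ) * Complex.I) with hbf
    have hbB : ∀ x y : K, Filter.Tendsto (fun n => (⟪schurSeq A B (epsn n) n x, y⟫ : ℂ))
        Filter.atTop (nhds (bf x y)) := by
      intro x y
      have hrw : (fun n => (⟪schurSeq A B (epsn n) n x, y⟫ : ℂ))
          = fun n => ((((gseq A B n (x+y) - gseq A B n x - gseq A B n y)/2 : ℝ) : ℂ)
            + (((-(gseq A B n (x + Complex.I • y) - gseq A B n x - gseq A B n y))/2 : ℝ) : ℂ)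
              * Complex.I) :=
        funext fun n => polar _ ((schur_main A B T hT hA hpos (epsn n) (epsn_pos n) n).1) x y
      rw [hrw]
      have t1 : Filter.Tendsto (fun n => (gseq A B n (x+y) - gseq A B n x - gseq A B n y)/2)
          Filter.atTop (nhds ((f (x+y) - f x - f y)/2)) :=
        (((hconv (x+y)).sub (hconv x)).sub (hconv y)).div_const 2
      have t2 : Filter.Tendsto
          (fun n => (-(gseq A B n (x + Complex.I • y) - gseq A B n x - gseq A B n y))/2)
          Filter.atTop (nhds ((-(f (x + Complex.I • y) - f x - f y))/2)) :=
        ((((hconv (x + Complex.I • y)).sub (hconv x)).sub (hconv y)).neg).div_const 2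
      exact ((Complex.continuous_ofReal.tendsto _).comp t1).add
        (((Complex.continuous_ofReal.tendsto _).comp t2).mul_const Complex.I)
    have hb_addr : ∀ x y z : K, bf x (y + z) = bf x y + bf x z := by
      intro x y z
      have h2 := (hbB x y).add (hbB x z)
      rw [show (fun n => (⟪schurSeq A B (epsn n) n x, y⟫ : ℂ)
          + (⟪schurSeq A B (epsn n) n x, z⟫ : ℂ))
          = (fun n => (⟪schurSeq A B (epsn n) n x, y + z⟫ : ℂ)) from
        funext fun n => (inner_add_right _ _ _).symm] at h2
      exact tendsto_nhds_unique (hbB x (y+z)) h2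
    have hb_smulr : ∀ (c : ℂ) (x y : K), bf x (c • y) = c * bf x y := by
      intro c x y
      have h2 := (hbB x y).const_mul c
      rw [show (fun n => c * (⟪schurSeq A B (epsn n) n x, y⟫ : ℂ))
          = (fun n => (⟪schurSeq A B (epsn n) n x, c • y⟫ : ℂ)) from
        funext fun n => (inner_smul_right _ _ _).symm] at h2
      exact tendsto_nhds_unique (hbB x (c • y)) h2
    have hb_addl : ∀ x x' y : K, bf (x + x') y = bf x y + bf x' y := by
      intro x x' y
      have h2 := (hbB x y).add (hbB x' y)
      rw [show (fun n => (⟪schurSeq A B (epsn n) n x, y⟫ : ℂ)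
          + (⟪schurSeq A B (epsn n) n x', y⟫ : ℂ))
          = (fun n => (⟪schurSeq A B (epsn n) n (x + x'), y⟫ : ℂ)) from
        funext fun n => by rw [map_add, inner_add_left]] at h2
      exact tendsto_nhds_unique (hbB (x + x') y) h2
    have hb_smull : ∀ (c : ℂ) (x y : K), bf (c • x) y = (starRingEnd ℂ) c * bf x y := by
      intro c x y
      have h2 := (hbB x y).const_mul ((starRingEnd ℂ) c)
      rw [show (fun n => (starRingEnd ℂ) c * (⟪schurSeq A B (epsn n) n x, y⟫ : ℂ))
          = (fun n => (⟪schurSeq A B (epsn n) n (c • x), y⟫ : ℂ)) from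
        funext fun n => by rw [map_smul, inner_smul_left]] at h2
      exact tendsto_nhds_unique (hbB (c • x) y) h2
    have hb_bound : ∀ x y : K, ‖bf x y‖ ≤ (‖A‖+1) * ‖x‖ * ‖y‖ := by
      intro x y
      exact le_of_tendsto (hbB x y).norm
        (Filter.Eventually.of_forall fun n => g_cs A B T hT hA hpos n x y)
    set Φ : K → (K →L[ℂ] ℂ) := fun x => LinearMap.mkContinuous
      { toFun := fun y => bf x y
        map_add' := hb_addr x
        map_smul' := fun c y => by simpa using hb_smulr c x y }
      ((‖A‖+1) * ‖x‖)
      (fun y => by simpa [mul_assoc] using hb_bound x y) with hΦdef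
    have hΦ : ∀ x y, Φ x y = bf x y := fun x y => rfl
    set M0 : K → K := fun x => (InnerProductSpace.toDual ℂ K).symm (Φ x) with hM0def
    have hM0 : ∀ x y : K, (⟪M0 x, y⟫ : ℂ) = bf x y := by
      intro x y
      rw [hM0def]
      exact InnerProductSpace.toDual_symm_apply
    have hM0add : ∀ x x' : K, M0 (x + x') = M0 x + M0 x' := by
      intro x x'
      refine ext_inner_right ℂ fun v => ?_
      rw [hM0, inner_add_left, hM0, hM0, hb_addl]
    have hM0smul : ∀ (c : ℂ) (x : K), M0 (c • x) = c • M0 x := by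
      intro c x
      refine ext_inner_right ℂ fun v => ?_
      rw [hM0, inner_smul_left, hM0, hb_smull]
    have hM0norm : ∀ x : K, ‖M0 x‖ ≤ (‖A‖+1) * ‖x‖ := by
      intro x
      by_cases h : M0 x = 0
      · rw [h, norm_zero]; positivity
      · have h1 : (⟪M0 x, M0 x⟫ : ℂ).re = ‖M0 x‖^2 := by
          rw [← RCLike.re_to_complex]; exact inner_self_eq_norm_sq _
        have h2 : (⟪M0 x, M0 x⟫ : ℂ).re ≤ ‖(⟪M0 x, M0 x⟫ : ℂ)‖ := by
          calc (⟪M0 x, M0 x⟫ : ℂ).re ≤ |(⟪M0 x, M0 x⟫ : ℂ).re| := le_abs_self _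
          _ ≤ ‖(⟪M0 x, M0 x⟫ : ℂ)‖ := by
              exact Complex.abs_re_le_norm _
        have h3 : ‖(⟪M0 x, M0 x⟫ : ℂ)‖ = ‖bf x (M0 x)‖ := by rw [hM0]
        have h4 := hb_bound x (M0 x)
        have h5 : ‖M0 x‖^2 ≤ (‖A‖+1)*‖x‖*‖M0 x‖ := by linarith
        have hposn : 0 < ‖M0 x‖ := norm_pos_iff.2 h
        exact le_of_mul_le_mul_right (by nlinarith) hposn
    set Mlin : K →ₗ[ℂ] K :=
      { toFun := M0
        map_add' := hM0add
        map_smul' := fun c x => by simpa using hM0smul c x } with hMlindef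
    set Mop : K →L[ℂ] K := Mlin.mkContinuous ((‖A‖+1)) hM0norm with hMopdef
    have hMop : ∀ u v : K, (⟪Mop u, v⟫ : ℂ) = bf u v := fun u v => hM0 u v
    refine ⟨Mop, ?_⟩
    intro x y
    have hfxx : ∀ z : K, bf z z = ((f z : ℝ) : ℂ) := by
      intro z
      have h4 : f (z + z) = 4 * f z := by
        rw [show z + z = (2:ℂ) • z from (two_smul ℂ z).symm, hfsmul]
        norm_num [Complex.normSq_apply]
      have h2' : f (z + Complex.I • z) = 2 * f z := by
        rw [show z + Complex.I • z = ((1 + Complex.I :ℂ)) • z by rw [add_smul, one_smul],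
          hfsmul]
        norm_num [Complex.normSq_apply]
      simp only [hbf]
      rw [h4, h2']
      push_cast
      ring
    have hAreal : (⟪A x, x⟫ : ℂ) = (((⟪A x, x⟫ : ℂ).re : ℝ) : ℂ) := by
      have hc : (starRingEnd ℂ) ⟪A x, x⟫ = (⟪A x, x⟫ : ℂ) := by
        rw [inner_conj_symm, ← ContinuousLinearMap.adjoint_inner_left, hA.adjoint_eq]
      exact (Complex.conj_eq_iff_re.1 hc).symm
    have hM_xx : (⟪Mop x, x⟫ : ℂ) = ((f x : ℝ) : ℂ) := by rw [hMop, hfxx]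
    have hM_yy : (⟪Mop y, y⟫ : ℂ) = ((f y : ℝ) : ℂ) := by rw [hMop, hfxx]
    have hkey := hfstep x y
    rw [ContinuousLinearMap.sub_apply, inner_sub_left, hM_xx, hM_yy, hAreal]
    rw [show ((((⟪A x, x⟫ : ℂ).re : ℝ) : ℂ) - ((f x : ℝ) : ℂ)
        + (((2 * (⟪B x, y⟫ : ℂ).re : ℝ)) : ℂ) + ((f y : ℝ) : ℂ))
        = ((((⟪A x, x⟫ : ℂ).re - f x + 2*(⟪B x, y⟫ : ℂ).re + f y : ℝ)) : ℂ) by push_cast; ring]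
    exact Complex.zero_le_real.2 (by linarith)
  · -- easy direction
    rintro ⟨M, hM⟩
    constructor
    · -- selfadjointness
      rw [← ContinuousLinearMap.isSelfAdjoint_iff_isSymmetric, ContinuousLinearMap.isSelfAdjoint_iff']
      apply lp_ext_single
      intro k x
      apply lp.ext
      funext j
      refine ext_inner_right ℂ fun y => ?_
      rw [← lp.inner_single_right, ← lp.inner_single_right]
      rw [ContinuousLinearMap.adjoint_inner_left]
      rw [show (⟪lp.single 2 k x, T (lp.single 2 j y)⟫ : ℂ)
          = (starRingEnd ℂ) (⟪T (lp.single 2 j y), lp.single 2 k x⟫ : ℂ) from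
        (inner_conj_symm _ _).symm]
      rw [hT k j y x, hT j k x y]
      by_cases h1 : j = k
      · subst h1
        rw [if_pos rfl, if_pos rfl, inner_conj_symm,
          ← ContinuousLinearMap.adjoint_inner_left, hA.adjoint_eq]
      · by_cases h2 : j = k+1
        · subst h2
          rw [if_neg (show ¬k = k+1 by omega), if_neg (show ¬k = (k+1)+1 by omega),
            if_pos rfl, if_neg (show ¬k+1 = k by omega), if_pos rfl,
            inner_conj_symm, ContinuousLinearMap.adjoint_inner_right]
        · by_cases h3 : k = j+1
          · subst h3
            rw [if_neg (show ¬j+1 = j by omega), if_pos rfl,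
              if_neg (show ¬j = j+1 by omega), if_neg (show ¬j = (j+1)+1 by omega),
              if_pos rfl, inner_conj_symm, ← ContinuousLinearMap.adjoint_inner_left]
          · rw [if_neg (show ¬k = j by omega), if_neg (show ¬k = j+1 from h3),
              if_neg (show ¬j = k+1 from h2), if_neg (show ¬j = k from h1),
              if_neg (show ¬j = k+1 from h2), if_neg (show ¬k = j+1 from h3)]
            simp
    · -- positivity
      intro u
      have hsum : Filter.Tendsto (fun n => emb (fun j => u j) n) Filter.atTop (nhds u) := by
        have h := (lp.hasSum_single (by norm_num : (2:ENNReal) ≠ ⊤) u).tendsto_sum_nat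
        exact h
      have hQ : Filter.Tendsto (fun n => Qf T (fun j => u j) n) Filter.atTop
          (nhds ((⟪T u, u⟫ : ℂ).re)) := by
        have h1 : Filter.Tendsto
            (fun n => (⟪T (emb (fun j => u j) n), emb (fun j => u j) n⟫ : ℂ))
            Filter.atTop (nhds (⟪T u, u⟫ : ℂ)) :=
          ((T.continuous.tendsto u).comp hsum).inner hsum
        exact (Complex.continuous_re.tendsto _).comp h1
      have hge : 0 ≤ (⟪T u, u⟫ : ℂ).re :=
        ge_of_tendsto hQ (Filter.Eventually.of_forall fun n =>
          Qf_nonneg_blockpos A B T hT M hM (fun j => u j) n)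
      rwa [ContinuousLinearMap.reApplyInnerSelf_apply, RCLike.re_to_complex]
end
end
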